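/- arXiv:2307.08119 — 2 statements merged into one kernel-verified Lean document; each statement's English description precedes it below -/
import Mathlib

section
/- Let m ≥ 2 be an integer, a ∈ (0,1/m), and let ι : [0,1]³ → [0,1]³ be the involution ι(x,y,z) = (1−z, 1−y, 1−x). Then for every integer k ≥ 2, all φ_0,…,φ_{k−1} ∈ L^k(Leb), and all integers 0 = n_0 ≤ n_1 ≤ ⋯ ≤ n_{k−1}, one has |∫ ∏_{j=0}^{k−1} (φ_j∘g_a^{n_j}) dLeb − ∏_{j=0}^{k−1} ∫ φ_j dLeb| = |∫ ∏_{j=0}^{k−1} ((φ_j∘ι^{−1})∘g_{1/m−a}^{n_{k−1}−n_j}) dLeb − ∏_{j=0}^{k−1} ∫ φ_j∘ι^{−1} dLeb|. -/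
open MeasureTheory Set
open scoped ENNReal

noncomputable section

/-- The expanding base map `τ_a` on `[0,1]`. -/
def tauMap (m : ℕ) (a : ℝ) (x : ℝ) : ℝ :=
  if x < m * a then Int.fract (x / a) else (x - m * a) / (1 - m * a)

/-- The index `i ∈ {1,…,m}` such that `y ∈ [(i-1)/m, i/m)` (with `i = m` for `y = 1`). -/
def betaIdx (m : ℕ) (y : ℝ) : ℤ := if y = 1 then m else ⌊m * y⌋ + 1

/-- The heterochaos baker map `f_a`, as a self-map of `ℝ²`; only its restriction to the
unit square `[0,1]²` matters.  On `Ω⁺_{α_i} = [(i-1)a, ia) × [0,1]` (where `i - 1 = ⌊x/a⌋`)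
it is `(x,y) ↦ (τ_a x, y/m + (i-1)/m)`, and on `Ω⁺_{β_i}` (where `i = betaIdx m y`) it is
`(x,y) ↦ (τ_a x, m•y - i + 1)`, the affine surjection `[(i-1)/m, i/m) → [0,1)`. -/
def hbaker (m : ℕ) (a : ℝ) (p : ℝ × ℝ) : ℝ × ℝ :=
  if p.1 < m * a then
    (tauMap m a p.1, p.2 / m + (⌊p.1 / a⌋ : ℝ) / m)
  else
    (tauMap m a p.1, m * p.2 - ((betaIdx m p.2 : ℝ) - 1))

/-- The three-dimensional heterochaos baker map `f_{a,b}` on `[0,1]³` (as a self-map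
of `ℝ³`): `f_{a,b}(x,y,z) = (f_a(x,y), (1-mb)z)` on `Ω_{α_i}` and
`f_{a,b}(x,y,z) = (f_a(x,y), bz + 1 + b(i-m-1))` on `Ω_{β_i}`. -/
def hbaker3 (m : ℕ) (a b : ℝ) (p : ℝ × ℝ × ℝ) : ℝ × ℝ × ℝ :=
  ((hbaker m a (p.1, p.2.1)).1, (hbaker m a (p.1, p.2.1)).2,
    if p.1 < m * a then (1 - m * b) * p.2.2
    else b * p.2.2 + 1 + b * ((betaIdx m p.2.1 : ℝ) - m - 1))

/-- `g_a = f_{a, 1/m - a}`, the Lebesgue-measure-preserving member of the family. -/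
def gmap (m : ℕ) (a : ℝ) : ℝ × ℝ × ℝ → ℝ × ℝ × ℝ := hbaker3 m a (1 / m - a)

/-- The unit cube `[0,1]³`. -/
def unitCube : Set (ℝ × ℝ × ℝ) := Icc 0 1 ×ˢ Icc 0 1 ×ˢ Icc 0 1

/-- Lebesgue measure on `[0,1]³`. -/
def Leb3 : Measure (ℝ × ℝ × ℝ) := volume.restrict unitCube


/-- The involution `ι(x,y,z) = (1-z, 1-y, 1-x)` of `[0,1]³`; note `ι⁻¹ = ι`. -/
def iotaMap (p : ℝ × ℝ × ℝ) : ℝ × ℝ × ℝ := (1 - p.2.2, 1 - p.2.1, 1 - p.1)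

/-!
On each of the `2m` pieces `Ω_{α_i}`, `Ω_{β_i}` (half-open boxes), `g_a` is a diagonal affine
map onto a box of the same volume, and these image boxes again tile the cube; hence `g_a`
preserves Lebesgue measure. The involution `ι` carries the image of `Ω_{α_i}` under `g_a` onto
`Ω_{β_{m+1-i}}` of `g_{1/m-a}` and the image of `Ω_{β_i}` onto `Ω_{α_{m+1-i}}`, and on matching
boxes the branch of `g_{1/m-a}` is `ι ∘ (branch of g_a)⁻¹ ∘ ι`. So `g_{1/m-a} ∘ ι ∘ g_a = ι` off
the null set of box boundaries, hence along almost every orbit of `g_a`, which gives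
`g_{1/m-a}^[N-n] (ι (g_a^[N] p)) = ι (g_a^[n] p)`. The measure-preserving change of variables
`q = ι (g_a^[N] p)` then turns one correlation integral into the other, and `∫ φ ∘ ι = ∫ φ`.
-/

open Function

def affineIco (l u l' u' x : ℝ) : ℝ := l' + (u' - l') / (u - l) * (x - l)

lemma affineIco_one_sub {l u : ℝ} (h : l ≠ u) (l' u' x : ℝ) :
    affineIco (1 - u) (1 - l) (1 - u') (1 - l') (1 - x) = 1 - affineIco l u l' u' x := by
  have := sub_ne_zero.2 h.symm
  unfold affineIco
  rw [show 1 - l - (1 - u) = u - l by ring, show 1 - l' - (1 - u') = u' - l' by ring]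
  field_simp
  ring

lemma affineIco_affineIco {l u l' u' : ℝ} (h : l ≠ u) (h' : l' ≠ u') (x : ℝ) :
    affineIco l' u' l u (affineIco l u l' u' x) = x := by
  have := sub_ne_zero.2 h.symm
  have := sub_ne_zero.2 h'.symm
  unfold affineIco
  field_simp
  ring

lemma measurable_affineIco (l u l' u' : ℝ) : Measurable (affineIco l u l' u') := by
  unfold affineIco
  fun_prop

lemma preimage_affineIco_Ico {l u l' u' : ℝ} (h : l < u) (h' : l' < u') :
    affineIco l u l' u' ⁻¹' Ico l' u' = Ico l u := by
  have hc : 0 < (u' - l') / (u - l) := div_pos (sub_pos.2 h') (sub_pos.2 h)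
  have hmono : StrictMono (affineIco l u l' u') := fun x y hxy => by
    unfold affineIco
    gcongr
  have hl : affineIco l u l' u' l = l' := by simp [affineIco]
  have hu : affineIco l u l' u' u = u' := by
    unfold affineIco
    field_simp [(sub_pos.2 h).ne']
    ring
  generalize affineIco l u l' u' = f at *
  ext x
  constructor <;> rintro ⟨h₁, h₂⟩
  · rw [← hl] at h₁
    rw [← hu] at h₂
    exact ⟨hmono.le_iff_le.1 h₁, hmono.lt_iff_lt.1 h₂⟩
  · exact ⟨hl ▸ hmono.monotone h₁, hu ▸ hmono h₂⟩

lemma map_affineIco_volume {l u l' u' : ℝ} (h : l < u) (h' : l' < u') :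
    Measure.map (affineIco l u l' u') volume = ENNReal.ofReal ((u - l) / (u' - l')) • volume := by
  set c := (u' - l') / (u - l)
  have hc : c ≠ 0 := (div_pos (sub_pos.2 h') (sub_pos.2 h)).ne'
  have hsplit : affineIco l u l' u' = (fun y => l' - c * l + y) ∘ (c * ·) := by
    ext x
    simp only [affineIco, comp_apply]
    ring
  rw [hsplit, ← Measure.map_map (measurable_const_add _) (measurable_const_mul _),
    Real.map_volume_mul_left hc, Measure.map_smul, map_add_left_eq_self, inv_div,
    abs_of_pos (div_pos (sub_pos.2 h) (sub_pos.2 h'))]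

def box (l u : ℝ × ℝ × ℝ) : Set (ℝ × ℝ × ℝ) :=
  Ico l.1 u.1 ×ˢ Ico l.2.1 u.2.1 ×ˢ Ico l.2.2 u.2.2

def CoordLT (l u : ℝ × ℝ × ℝ) : Prop := l.1 < u.1 ∧ l.2.1 < u.2.1 ∧ l.2.2 < u.2.2

def boxVolume (l u : ℝ × ℝ × ℝ) : ℝ := (u.1 - l.1) * (u.2.1 - l.2.1) * (u.2.2 - l.2.2)

def boxAffine (l u l' u' : ℝ × ℝ × ℝ) : ℝ × ℝ × ℝ → ℝ × ℝ × ℝ :=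
  Prod.map (affineIco l.1 u.1 l'.1 u'.1)
    (Prod.map (affineIco l.2.1 u.2.1 l'.2.1 u'.2.1) (affineIco l.2.2 u.2.2 l'.2.2 u'.2.2))

lemma measurableSet_box (l u : ℝ × ℝ × ℝ) : MeasurableSet (box l u) :=
  measurableSet_Ico.prod (measurableSet_Ico.prod measurableSet_Ico)

lemma preimage_boxAffine_box {l u l' u' : ℝ × ℝ × ℝ} (h : CoordLT l u) (h' : CoordLT l' u') :
    boxAffine l u l' u' ⁻¹' box l' u' = box l u := by
  simp only [boxAffine, box, preimage_prod_map_prod, preimage_affineIco_Ico h.1 h'.1,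
    preimage_affineIco_Ico h.2.1 h'.2.1, preimage_affineIco_Ico h.2.2 h'.2.2]

lemma boxAffine_boxAffine {l u l' u' : ℝ × ℝ × ℝ} (h : CoordLT l u) (h' : CoordLT l' u')
    (p : ℝ × ℝ × ℝ) : boxAffine l' u' l u (boxAffine l u l' u' p) = p := by
  simp only [boxAffine, Prod.map, affineIco_affineIco h.1.ne h'.1.ne,
    affineIco_affineIco h.2.1.ne h'.2.1.ne, affineIco_affineIco h.2.2.ne h'.2.2.ne]

lemma boxAffine_iotaMap {l u : ℝ × ℝ × ℝ} (h : CoordLT l u) (l' u' p : ℝ × ℝ × ℝ) :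
    boxAffine (iotaMap u) (iotaMap l) (iotaMap u') (iotaMap l') (iotaMap p) =
      iotaMap (boxAffine l u l' u' p) := by
  simp only [boxAffine, iotaMap, Prod.map, affineIco_one_sub h.1.ne,
    affineIco_one_sub h.2.1.ne, affineIco_one_sub h.2.2.ne]

lemma measurePreserving_prodMap₃ {f g h : ℝ → ℝ} {c₁ c₂ c₃ : ℝ≥0∞}
    (hf : Measurable f) (hg : Measurable g) (hh : Measurable h)
    (hf' : Measure.map f volume = c₁ • volume) (hg' : Measure.map g volume = c₂ • volume)
    (hh' : Measure.map h volume = c₃ • volume) (hc : c₁ * (c₂ * c₃) = 1) :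
    MeasurePreserving (Prod.map f (Prod.map g h)) volume volume := by
  refine ⟨hf.prodMap (hg.prodMap hh), ?_⟩
  simp only [Measure.volume_eq_prod]
  rw [← Measure.map_prod_map _ _ hf (hg.prodMap hh), ← Measure.map_prod_map _ _ hg hh, hf', hg',
    hh']
  simp only [Measure.prod_smul_left, Measure.prod_smul_right, smul_smul]
  rw [show c₃ * c₂ * c₁ = 1 by rw [← hc]; ring, one_smul]

lemma measurePreserving_boxAffine {l u l' u' : ℝ × ℝ × ℝ} (h : CoordLT l u) (h' : CoordLT l' u')
    (hvol : boxVolume l u = boxVolume l' u') :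
    MeasurePreserving (boxAffine l u l' u') volume volume := by
  refine measurePreserving_prodMap₃ (measurable_affineIco ..) (measurable_affineIco ..)
    (measurable_affineIco ..) (map_affineIco_volume h.1 h'.1) (map_affineIco_volume h.2.1 h'.2.1)
    (map_affineIco_volume h.2.2 h'.2.2) ?_
  obtain ⟨h₁, h₂, h₃⟩ := h
  obtain ⟨h₁', h₂', h₃'⟩ := h'
  rw [boxVolume, boxVolume] at hvol
  rw [← ENNReal.ofReal_mul (by positivity), ← ENNReal.ofReal_mul (by positivity),
    ENNReal.ofReal_eq_one, div_mul_div_comm, div_mul_div_comm, ← mul_assoc, ← mul_assoc, hvol]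
  exact div_self (by positivity)

-- `ι` turns `Ico` sides into `Ioc` sides, so this holds only off the boundary of the box.
lemma ae_restrict_box_iotaMap_mem (l u : ℝ × ℝ × ℝ) :
    ∀ᵐ p ∂volume.restrict (box l u), iotaMap p ∈ box (iotaMap u) (iotaMap l) := by
  have hIoo : box l u =ᵐ[volume] Ioo l.1 u.1 ×ˢ Ioo l.2.1 u.2.1 ×ˢ Ioo l.2.2 u.2.2 :=
    (Measure.set_prod_ae_eq Ioo_ae_eq_Ico
      (Measure.set_prod_ae_eq Ioo_ae_eq_Ico Ioo_ae_eq_Ico)).symm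
  rw [ae_restrict_congr_set hIoo]
  refine ae_restrict_of_forall_mem
    (measurableSet_Ioo.prod (measurableSet_Ioo.prod measurableSet_Ioo)) ?_
  rintro p ⟨⟨hx₁, hx₂⟩, ⟨hy₁, hy₂⟩, hz₁, hz₂⟩
  simp only [box, iotaMap, mem_prod, mem_Ico]
  refine ⟨⟨?_, ?_⟩, ⟨?_, ?_⟩, ?_, ?_⟩ <;> linarith

lemma iUnion_Ico_add_mul {c : ℝ} (hc : 0 < c) (o : ℝ) (N : ℕ) :
    ⋃ i : Fin N, Ico (o + i * c) (o + (i + 1) * c) = Ico o (o + N * c) := by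
  ext x
  simp only [mem_iUnion, mem_Ico]
  constructor
  · rintro ⟨i, h₁, h₂⟩
    have : ((i : ℕ) : ℝ) + 1 ≤ N := by exact_mod_cast i.isLt
    constructor <;> nlinarith
  · rintro ⟨h₁, h₂⟩
    have hx : 0 ≤ (x - o) / c := div_nonneg (by linarith) hc.le
    have hN : (x - o) / c < N := by
      rw [div_lt_iff₀ hc]
      linarith
    have hlo := Nat.floor_le hx
    have hhi := Nat.lt_floor_add_one ((x - o) / c)
    rw [le_div_iff₀ hc] at hlo
    rw [div_lt_iff₀ hc] at hhi
    exact ⟨⟨⌊(x - o) / c⌋₊, (Nat.floor_lt hx).2 hN⟩, by simp only; linarith, by simp only; linarith⟩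

lemma pairwise_disjoint_Ico_add_mul (o c : ℝ) (N : ℕ) :
    Pairwise (Disjoint on fun i : Fin N => Ico (o + i * c) (o + (i + 1) * c)) := by
  intro i j hij
  have := pairwise_disjoint_Ico_add_zsmul o c
    (Nat.cast_injective.ne (Fin.val_injective.ne hij) : ((i : ℕ) : ℤ) ≠ j)
  simpa [onFun, zsmul_eq_mul] using this

lemma floor_div_eq_of_mem_Ico {c x : ℝ} (hc : 0 < c) {i : ℕ}
    (hx : x ∈ Ico (i * c) ((i + 1) * c)) : ⌊x / c⌋ = i := by
  rw [Int.floor_eq_iff, le_div_iff₀ hc, div_lt_iff₀ hc]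
  exact_mod_cast hx

theorem map_restrict_iUnion_of_piecewise {α β ι : Type*} [MeasurableSpace α] [MeasurableSpace β]
    [Countable ι] {μ : Measure α} {ν : Measure β} {T : α → β} {A : ι → α → β}
    {P : ι → Set α} {Q : ι → Set β} (hT : Measurable T) (hA : ∀ i, MeasurePreserving (A i) μ ν)
    (hTA : ∀ i, EqOn T (A i) (P i)) (hAQ : ∀ i, A i ⁻¹' Q i = P i)
    (hQ : ∀ i, MeasurableSet (Q i)) (hPd : Pairwise (Disjoint on P))
    (hQd : Pairwise (Disjoint on Q)) :
    (μ.restrict (⋃ i, P i)).map T = ν.restrict (⋃ i, Q i) := by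
  have hP i : MeasurableSet (P i) := hAQ i ▸ (hA i).measurable (hQ i)
  ext s hs
  have hpiece i : T ⁻¹' s ∩ P i = A i ⁻¹' (s ∩ Q i) := by
    rw [preimage_inter, hAQ]
    ext p
    simp only [mem_inter_iff, mem_preimage]
    exact and_congr_left fun hp => by rw [hTA i hp]
  rw [Measure.map_apply hT hs, Measure.restrict_apply (hT hs), Measure.restrict_apply hs,
    inter_iUnion, inter_iUnion,
    measure_iUnion (hPd.mono fun i j h => h.mono inter_subset_right inter_subset_right)
      fun i => (hT hs).inter (hP i),
    measure_iUnion (hQd.mono fun i j h => h.mono inter_subset_right inter_subset_right)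
      fun i => hs.inter (hQ i)]
  simp_rw [hpiece, fun i => (hA i).measure_preimage (hs.inter (hQ i)).nullMeasurableSet]

lemma iterate_apply_reversal {α : Type*} {T S J : α → α} {p : α}
    (h : ∀ t, S (J (T (T^[t] p))) = J (T^[t] p)) (s : ℕ) : S^[s] (J (T^[s] p)) = J p := by
  induction s with
  | zero => rfl
  | succ s ih => rw [iterate_succ_apply, iterate_succ_apply', h, ih]

theorem integral_prod_iterate_eq_of_timeReversal {α ι : Type*} [MeasurableSpace α] [Fintype ι]
    {μ : Measure α} {T S J : α → α} (hT : MeasurePreserving T μ μ) (hJ : MeasurePreserving J μ μ)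
    (hS : MeasurePreserving S μ μ) (hJJ : Involutive J)
    (hconj : ∀ᵐ p ∂μ, S (J (T p)) = J p) {φ : ι → α → ℝ}
    (hφ : ∀ j, AEStronglyMeasurable (φ j) μ) {n : ι → ℕ} {N : ℕ} (hn : ∀ j, n j ≤ N) :
    ∫ p, ∏ j, φ j (T^[n j] p) ∂μ = ∫ q, ∏ j, (φ j ∘ J) (S^[N - n j] q) ∂μ := by
  set G : α → ℝ := fun q => ∏ j, (φ j ∘ J) (S^[N - n j] q)
  have hR : MeasurePreserving (J ∘ T^[N]) μ μ := hJ.comp (hT.iterate N)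
  have hG : AEStronglyMeasurable G μ := Finset.aestronglyMeasurable_fun_prod _ fun j _ =>
    (hφ j).comp_quasiMeasurePreserving (hJ.comp (hS.iterate _)).quasiMeasurePreserving
  have horbit : ∀ᵐ p ∂μ, ∀ t, S (J (T (T^[t] p))) = J (T^[t] p) :=
    ae_all_iff.2 fun t => (hT.iterate t).quasiMeasurePreserving.ae hconj
  have hpointwise : (fun p => ∏ j, φ j (T^[n j] p)) =ᵐ[μ] G ∘ (J ∘ T^[N]) := by
    filter_upwards [horbit] with p hp
    refine Finset.prod_congr rfl fun j _ => ?_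
    have hsplit : T^[N] p = T^[N - n j] (T^[n j] p) := by
      rw [← iterate_add_apply, Nat.sub_add_cancel (hn j)]
    have hback : S^[N - n j] (J (T^[N - n j] (T^[n j] p))) = J (T^[n j] p) :=
      iterate_apply_reversal (fun t => by rw [← iterate_add_apply]; exact hp _) _
    simp only [comp_apply, hsplit, hback, hJJ _]
  calc ∫ p, ∏ j, φ j (T^[n j] p) ∂μ = ∫ p, G ((J ∘ T^[N]) p) ∂μ := integral_congr_ae hpointwise
    _ = ∫ q, G q ∂μ.map (J ∘ T^[N]) := (integral_map hR.aemeasurable (by rwa [hR.map_eq])).symm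
    _ = ∫ q, G q ∂μ := by rw [hR.map_eq]

lemma involutive_iotaMap : Involutive iotaMap := fun p => by simp [iotaMap]

lemma measurePreserving_iotaMap_volume : MeasurePreserving iotaMap volume volume := by
  have hrefl := Measure.measurePreserving_sub_left (volume : Measure ℝ) 1
  have hrev : MeasurePreserving
      (MeasurableEquiv.prodAssoc ∘ Prod.map Prod.swap id ∘ Prod.swap : ℝ × ℝ × ℝ → ℝ × ℝ × ℝ)
      volume volume :=
    volume_preserving_prodAssoc.comp ((Measure.measurePreserving_swap.prod
      (MeasurePreserving.id _)).comp Measure.measurePreserving_swap)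
  exact (hrefl.prod (hrefl.prod hrefl)).comp hrev

lemma preimage_iotaMap_unitCube : iotaMap ⁻¹' unitCube = unitCube := by
  ext p
  simp only [unitCube, iotaMap, mem_preimage, mem_prod, mem_Icc, sub_nonneg, sub_le_self_iff]
  tauto

lemma measurePreserving_iotaMap : MeasurePreserving iotaMap Leb3 Leb3 := by
  refine ⟨measurePreserving_iotaMap_volume.measurable, ?_⟩
  conv_lhs => rw [Leb3, ← preimage_iotaMap_unitCube]
  rw [← Measure.restrict_map (s := unitCube) measurePreserving_iotaMap_volume.measurable
      (measurableSet_Icc.prod (measurableSet_Icc.prod measurableSet_Icc)),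
    measurePreserving_iotaMap_volume.map_eq, Leb3]

lemma Leb3_eq_restrict_box : Leb3 = volume.restrict (box 0 1) :=
  Measure.restrict_congr_set (Measure.set_prod_ae_eq Ico_ae_eq_Icc
    (Measure.set_prod_ae_eq Ico_ae_eq_Icc Ico_ae_eq_Icc)).symm

@[fun_prop]
lemma measurable_betaIdx (m : ℕ) : Measurable (betaIdx m) :=
  Measurable.ite (measurableSet_singleton 1) measurable_const
    ((measurable_const.mul measurable_id).floor.add_const 1)

lemma measurable_tauMap (m : ℕ) (a : ℝ) : Measurable (tauMap m a) :=
  Measurable.ite (measurableSet_lt measurable_id measurable_const)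
    (measurable_id.div_const a).fract ((measurable_id.sub_const _).div_const _)

lemma measurable_hbaker (m : ℕ) (a : ℝ) : Measurable (hbaker m a) := by
  unfold hbaker
  refine Measurable.ite (measurableSet_lt measurable_fst measurable_const) ?_ ?_ <;>
    refine ((measurable_tauMap m a).comp measurable_fst).prodMk ?_ <;> fun_prop

lemma measurable_gmap (m : ℕ) (a : ℝ) : Measurable (gmap m a) := by
  have hf : Measurable fun p : ℝ × ℝ × ℝ => hbaker m a (p.1, p.2.1) :=
    (measurable_hbaker m a).comp (by fun_prop)
  unfold gmap hbaker3
  exact hf.fst.prodMk (hf.snd.prodMk (Measurable.ite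
    (measurableSet_lt measurable_fst measurable_const) (by fun_prop) (by fun_prop)))

section Pieces

/- With 0-based indices, `inl i` is `Ω_{α_{i+1}}` and `inr j` is `Ω_{β_{j+1}}`, cut down to the
half-open cube `[0,1)³`, as the box from `pieceLo` to `pieceHi`; `imageLo`, `imageHi` are the
corners of its image under `g_a`. -/

def pieceLo (m : ℕ) (a : ℝ) : Fin m ⊕ Fin m → ℝ × ℝ × ℝ
  | .inl i => ((i : ℕ) * a, 0, 0)
  | .inr j => (m * a, (j : ℕ) / m, 0)

def pieceHi (m : ℕ) (a : ℝ) : Fin m ⊕ Fin m → ℝ × ℝ × ℝ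
  | .inl i => (((i : ℕ) + 1) * a, 1, 1)
  | .inr j => (1, ((j : ℕ) + 1) / m, 1)

def imageLo (m : ℕ) (a : ℝ) : Fin m ⊕ Fin m → ℝ × ℝ × ℝ
  | .inl i => (0, (i : ℕ) / m, 0)
  | .inr j => (0, 0, m * a + (j : ℕ) * (1 / m - a))

def imageHi (m : ℕ) (a : ℝ) : Fin m ⊕ Fin m → ℝ × ℝ × ℝ
  | .inl i => (1, ((i : ℕ) + 1) / m, m * a)
  | .inr j => (1, 1, m * a + ((j : ℕ) + 1) * (1 / m - a))

variable {m : ℕ} {a : ℝ}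

lemma natCast_pos_of_mem_Ioo (ha : a ∈ Ioo 0 (1 / (m : ℝ))) : (0 : ℝ) < m := by
  exact_mod_cast one_div_pos.1 (ha.1.trans ha.2)

lemma natCast_mul_lt_one_of_mem_Ioo (ha : a ∈ Ioo 0 (1 / (m : ℝ))) : m * a < 1 := by
  have := ha.2
  rwa [lt_div_iff₀' (natCast_pos_of_mem_Ioo ha)] at this

lemma one_div_sub_mem_Ioo (ha : a ∈ Ioo 0 (1 / (m : ℝ))) :
    1 / (m : ℝ) - a ∈ Ioo 0 (1 / (m : ℝ)) :=
  ⟨sub_pos.2 ha.2, sub_lt_self _ ha.1⟩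

lemma coordLT_piece (ha : a ∈ Ioo 0 (1 / (m : ℝ))) (i : Fin m ⊕ Fin m) :
    CoordLT (pieceLo m a i) (pieceHi m a i) := by
  have hm := natCast_pos_of_mem_Ioo ha
  have hma := natCast_mul_lt_one_of_mem_Ioo ha
  have := ha.1
  cases i <;> refine ⟨?_, ?_, ?_⟩ <;> simp only [pieceLo, pieceHi] <;>
    first | positivity | linarith | (gcongr; linarith)

lemma coordLT_image (ha : a ∈ Ioo 0 (1 / (m : ℝ))) (i : Fin m ⊕ Fin m) :
    CoordLT (imageLo m a i) (imageHi m a i) := by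
  have hm := natCast_pos_of_mem_Ioo ha
  have hb := (one_div_sub_mem_Ioo ha).1
  have := ha.1
  cases i <;> refine ⟨?_, ?_, ?_⟩ <;> simp only [imageLo, imageHi] <;>
    first | positivity | (gcongr; linarith)

lemma boxVolume_piece (ha : a ∈ Ioo 0 (1 / (m : ℝ))) (i : Fin m ⊕ Fin m) :
    boxVolume (pieceLo m a i) (pieceHi m a i) = boxVolume (imageLo m a i) (imageHi m a i) := by
  have hm := (natCast_pos_of_mem_Ioo ha).ne'
  cases i <;> simp only [boxVolume, pieceLo, pieceHi, imageLo, imageHi] <;> field_simp <;> ring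

lemma iUnion_box_piece (ha : a ∈ Ioo 0 (1 / (m : ℝ))) :
    ⋃ i, box (pieceLo m a i) (pieceHi m a i) = box 0 1 := by
  have hm := natCast_pos_of_mem_Ioo ha
  have hx := iUnion_Ico_add_mul ha.1 0 m
  have hy := iUnion_Ico_add_mul (inv_pos.2 hm) 0 m
  simp only [zero_add, ← div_eq_mul_inv, div_self hm.ne'] at hx hy
  simp only [box, iUnion_sum, pieceLo, pieceHi, ← iUnion_prod_const, ← prod_iUnion, hx, hy,
    ← union_prod]
  rw [Ico_union_Ico_eq_Ico (by have := ha.1; positivity) (natCast_mul_lt_one_of_mem_Ioo ha).le]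
  rfl

lemma iUnion_box_image (ha : a ∈ Ioo 0 (1 / (m : ℝ))) :
    ⋃ i, box (imageLo m a i) (imageHi m a i) = box 0 1 := by
  have hm := natCast_pos_of_mem_Ioo ha
  have hy := iUnion_Ico_add_mul (inv_pos.2 hm) 0 m
  have hz := iUnion_Ico_add_mul (one_div_sub_mem_Ioo ha).1 (m * a) m
  simp only [zero_add, ← div_eq_mul_inv, div_self hm.ne'] at hy
  rw [show (m : ℝ) * a + m * (1 / m - a) = 1 by field_simp; ring] at hz
  simp only [box, iUnion_sum, imageLo, imageHi, ← iUnion_prod_const, ← prod_iUnion, hy, hz,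
    ← prod_union]
  rw [Ico_union_Ico_eq_Ico (by have := ha.1; positivity) (natCast_mul_lt_one_of_mem_Ioo ha).le]
  rfl

lemma pairwise_disjoint_box_piece (ha : a ∈ Ioo 0 (1 / (m : ℝ))) :
    Pairwise (Disjoint on fun i => box (pieceLo m a i) (pieceHi m a i)) := by
  have hslab (i : Fin m) : Disjoint (Ico ((i : ℕ) * a) (((i : ℕ) + 1) * a)) (Ico (m * a) 1) :=
    Ico_disjoint_Ico_same.mono_left (Ico_subset_Ico_right
      (mul_le_mul_of_nonneg_right (by exact_mod_cast i.isLt) ha.1.le))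
  rintro (i | i) (j | j) hij <;> simp only [onFun, box, pieceLo, pieceHi, disjoint_prod]
  · exact .inl (by simpa using pairwise_disjoint_Ico_add_mul 0 a m (ne_of_apply_ne Sum.inl hij))
  · exact .inl (hslab i)
  · exact .inl (hslab j).symm
  · exact .inr (.inl (by simpa [div_eq_mul_inv] using
      pairwise_disjoint_Ico_add_mul 0 (m : ℝ)⁻¹ m (ne_of_apply_ne Sum.inr hij)))

lemma pairwise_disjoint_box_image (ha : a ∈ Ioo 0 (1 / (m : ℝ))) :
    Pairwise (Disjoint on fun i => box (imageLo m a i) (imageHi m a i)) := by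
  have hslab (j : Fin m) : Disjoint (Ico 0 (m * a))
      (Ico (m * a + (j : ℕ) * (1 / m - a)) (m * a + ((j : ℕ) + 1) * (1 / m - a))) :=
    Ico_disjoint_Ico_same.mono_right (Ico_subset_Ico_left (by
      have := (one_div_sub_mem_Ioo ha).1
      simp only [le_add_iff_nonneg_right]
      positivity))
  rintro (i | i) (j | j) hij <;> simp only [onFun, box, imageLo, imageHi, disjoint_prod]
  · exact .inr (.inl (by simpa [div_eq_mul_inv] using
      pairwise_disjoint_Ico_add_mul 0 (m : ℝ)⁻¹ m (ne_of_apply_ne Sum.inl hij)))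
  · exact .inr (.inr (hslab j))
  · exact .inr (.inr (hslab i).symm)
  · exact .inr (.inr (pairwise_disjoint_Ico_add_mul _ _ m (ne_of_apply_ne Sum.inr hij)))

lemma betaIdx_eq_of_mem_Ico {y : ℝ} (j : Fin m)
    (hy : y ∈ Ico ((j : ℕ) / (m : ℝ)) (((j : ℕ) + 1) / m)) : betaIdx m y = (j : ℕ) + 1 := by
  have hm : (0 : ℝ) < m := by exact_mod_cast j.pos
  have hy1 : y < 1 := hy.2.trans_le ((div_le_one hm).2 (by exact_mod_cast j.isLt))
  obtain ⟨h₁, h₂⟩ := hy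
  rw [div_le_iff₀ hm] at h₁
  rw [lt_div_iff₀ hm] at h₂
  rw [betaIdx, if_neg hy1.ne, add_left_inj, Int.floor_eq_iff]
  push_cast
  constructor <;> linarith

lemma eqOn_gmap_boxAffine (ha : a ∈ Ioo 0 (1 / (m : ℝ))) (i : Fin m ⊕ Fin m) :
    EqOn (gmap m a) (boxAffine (pieceLo m a i) (pieceHi m a i) (imageLo m a i) (imageHi m a i))
      (box (pieceLo m a i) (pieceHi m a i)) := by
  have hm := (natCast_pos_of_mem_Ioo ha).ne'
  have ha0 := ha.1.ne'
  rintro ⟨x, y, z⟩ ⟨hx, hy, hz⟩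
  cases i with
  | inl i =>
    have hxm : x < m * a := hx.2.trans_le
      (mul_le_mul_of_nonneg_right (by exact_mod_cast i.isLt) ha.1.le)
    simp only [pieceLo, pieceHi] at hx
    simp only [gmap, hbaker3, hbaker, tauMap, if_pos hxm, Int.fract,
      floor_div_eq_of_mem_Ico ha.1 hx, boxAffine, pieceLo, pieceHi, imageLo, imageHi, Prod.map,
      affineIco, Int.cast_natCast]
    refine Prod.ext ?_ (Prod.ext ?_ ?_) <;> simp only <;> field_simp <;> ring
  | inr j =>
    simp only [pieceLo, pieceHi] at hx hy
    simp only [gmap, hbaker3, hbaker, tauMap, if_neg (not_lt.2 hx.1), betaIdx_eq_of_mem_Ico j hy,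
      boxAffine, pieceLo, pieceHi, imageLo, imageHi, Prod.map, affineIco]
    refine Prod.ext ?_ (Prod.ext ?_ ?_) <;> simp only <;> push_cast <;> field_simp <;> ring

theorem measurePreserving_gmap (ha : a ∈ Ioo 0 (1 / (m : ℝ))) :
    MeasurePreserving (gmap m a) Leb3 Leb3 := by
  refine ⟨measurable_gmap m a, ?_⟩
  conv_lhs => rw [Leb3_eq_restrict_box, ← iUnion_box_piece ha]
  rw [map_restrict_iUnion_of_piecewise (measurable_gmap m a)
    (fun i => measurePreserving_boxAffine (coordLT_piece ha i) (coordLT_image ha i)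
      (boxVolume_piece ha i)) (eqOn_gmap_boxAffine ha)
    (fun i => preimage_boxAffine_box (coordLT_piece ha i) (coordLT_image ha i))
    (fun i => measurableSet_box _ _) (pairwise_disjoint_box_piece ha)
    (pairwise_disjoint_box_image ha), iUnion_box_image ha, Leb3_eq_restrict_box]

def pieceReverse (i : Fin m ⊕ Fin m) : Fin m ⊕ Fin m := (Sum.map Fin.rev Fin.rev i).swap

lemma cast_val_rev (i : Fin m) : ((i.rev : ℕ) : ℝ) = m - 1 - (i : ℕ) := by
  rw [Fin.val_rev, Nat.cast_sub i.isLt]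
  push_cast
  ring

lemma pieceLo_pieceReverse (i : Fin m ⊕ Fin m) :
    pieceLo m (1 / m - a) (pieceReverse i) = iotaMap (imageHi m a i) := by
  rcases i with i | i
  all_goals
    have : (m : ℝ) ≠ 0 := by exact_mod_cast i.pos.ne'
    simp only [pieceReverse, Sum.map_inl, Sum.map_inr, Sum.swap_inl, Sum.swap_inr, pieceLo,
      imageHi, iotaMap, cast_val_rev, Prod.mk.injEq]
    refine ⟨?_, ?_, ?_⟩ <;> field_simp <;> ring

lemma pieceHi_pieceReverse (i : Fin m ⊕ Fin m) :
    pieceHi m (1 / m - a) (pieceReverse i) = iotaMap (imageLo m a i) := by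
  rcases i with i | i
  all_goals
    have : (m : ℝ) ≠ 0 := by exact_mod_cast i.pos.ne'
    simp only [pieceReverse, Sum.map_inl, Sum.map_inr, Sum.swap_inl, Sum.swap_inr, pieceHi,
      imageLo, iotaMap, cast_val_rev, Prod.mk.injEq]
    refine ⟨?_, ?_, ?_⟩ <;> field_simp <;> ring

lemma imageLo_pieceReverse (i : Fin m ⊕ Fin m) :
    imageLo m (1 / m - a) (pieceReverse i) = iotaMap (pieceHi m a i) := by
  rcases i with i | i
  all_goals
    have : (m : ℝ) ≠ 0 := by exact_mod_cast i.pos.ne'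
    simp only [pieceReverse, Sum.map_inl, Sum.map_inr, Sum.swap_inl, Sum.swap_inr, pieceHi,
      imageLo, iotaMap, cast_val_rev, Prod.mk.injEq]
    refine ⟨?_, ?_, ?_⟩ <;> field_simp <;> ring

lemma imageHi_pieceReverse (i : Fin m ⊕ Fin m) :
    imageHi m (1 / m - a) (pieceReverse i) = iotaMap (pieceLo m a i) := by
  rcases i with i | i
  all_goals
    have : (m : ℝ) ≠ 0 := by exact_mod_cast i.pos.ne'
    simp only [pieceReverse, Sum.map_inl, Sum.map_inr, Sum.swap_inl, Sum.swap_inr, pieceLo,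
      imageHi, iotaMap, cast_val_rev, Prod.mk.injEq]
    refine ⟨?_, ?_, ?_⟩ <;> field_simp <;> ring

lemma gmap_iotaMap_gmap_of_mem (ha : a ∈ Ioo 0 (1 / (m : ℝ))) {i : Fin m ⊕ Fin m}
    {p : ℝ × ℝ × ℝ} (hp : p ∈ box (pieceLo m a i) (pieceHi m a i))
    (hιp : iotaMap p ∈ box (iotaMap (pieceHi m a i)) (iotaMap (pieceLo m a i))) :
    gmap m (1 / m - a) (iotaMap (gmap m a p)) = iotaMap p := by
  have hb := one_div_sub_mem_Ioo ha
  set q := boxAffine (pieceLo m a i) (pieceHi m a i) (imageLo m a i) (imageHi m a i) p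
  have hback : boxAffine (pieceLo m (1 / m - a) (pieceReverse i))
      (pieceHi m (1 / m - a) (pieceReverse i)) (imageLo m (1 / m - a) (pieceReverse i))
      (imageHi m (1 / m - a) (pieceReverse i)) (iotaMap q) = iotaMap p := by
    rw [pieceLo_pieceReverse, pieceHi_pieceReverse, imageLo_pieceReverse, imageHi_pieceReverse,
      boxAffine_iotaMap (coordLT_image ha i),
      boxAffine_boxAffine (coordLT_piece ha i) (coordLT_image ha i)]
  have hmem : iotaMap q ∈
      box (pieceLo m (1 / m - a) (pieceReverse i)) (pieceHi m (1 / m - a) (pieceReverse i)) := by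
    rw [← preimage_boxAffine_box (coordLT_piece hb _) (coordLT_image hb _), mem_preimage, hback,
      imageLo_pieceReverse, imageHi_pieceReverse]
    exact hιp
  rw [eqOn_gmap_boxAffine ha i hp, eqOn_gmap_boxAffine hb _ hmem, hback]

theorem ae_gmap_iotaMap_gmap (ha : a ∈ Ioo 0 (1 / (m : ℝ))) :
    ∀ᵐ p ∂Leb3, gmap m (1 / m - a) (iotaMap (gmap m a p)) = iotaMap p := by
  rw [Leb3_eq_restrict_box, ← iUnion_box_piece ha, ae_restrict_iUnion_iff]
  intro i
  filter_upwards [ae_restrict_mem (measurableSet_box _ _), ae_restrict_box_iotaMap_mem _ _]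
    with p hp hιp
  exact gmap_iotaMap_gmap_of_mem ha hp hιp

end Pieces

/-- **Invariance of correlations (Proposition 3.1).** For `m ≥ 2`, `a ∈ (0,1/m)`,
`k ≥ 2`, `φ_0,…,φ_{k-1} ∈ L^k(Leb)` and `0 = n_0 ≤ n_1 ≤ ⋯ ≤ n_{k-1}`:
`Cor_{n_1,…,n_{k-1}}(g_a; φ_0,…,φ_{k-1}; Leb)`
`= Cor(g_{1/m-a}; φ_0∘ι⁻¹,…,φ_{k-1}∘ι⁻¹; Leb)` with time shifts `n_{k-1} - n_j`
(here `ι⁻¹ = ι` since `ι` is an involution). -/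
theorem heterochaos_baker_correlation_invariance
    (m : ℕ) (a : ℝ) (ha : a ∈ Ioo (0 : ℝ) (1 / m))
    (k : ℕ) (hk : 2 ≤ k) (φ : Fin k → (ℝ × ℝ × ℝ → ℝ))
    (hφ : ∀ j, MemLp (φ j) (k : ℝ≥0∞) Leb3)
    (n : Fin k → ℕ) (hmono : Monotone n) :
    |(∫ p, ∏ j, φ j ((gmap m a)^[n j] p) ∂Leb3) - ∏ j, ∫ p, φ j p ∂Leb3| =
      |(∫ p, ∏ j, (φ j ∘ iotaMap) ((gmap m (1 / m - a))^[n ⟨k - 1, by omega⟩ - n j] p) ∂Leb3) -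
        ∏ j, ∫ p, (φ j ∘ iotaMap) p ∂Leb3| := by
  have hreverse := integral_prod_iterate_eq_of_timeReversal (measurePreserving_gmap ha)
    measurePreserving_iotaMap (measurePreserving_gmap (one_div_sub_mem_Ioo ha))
    involutive_iotaMap (ae_gmap_iotaMap_gmap ha) (fun j => (hφ j).aestronglyMeasurable)
    (N := n ⟨k - 1, by omega⟩) (fun j => hmono (Fin.mk_le_mk.2 (by omega) : j ≤ ⟨k - 1, _⟩))
  have hmarginal (j : Fin k) : ∫ p, (φ j ∘ iotaMap) p ∂Leb3 = ∫ p, φ j p ∂Leb3 :=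
    measurePreserving_iotaMap.integral_comp (MeasurableEquiv.ofInvolutive iotaMap
      involutive_iotaMap measurePreserving_iotaMap.measurable).measurableEmbedding (φ j)
  simp only [hreverse, hmarginal]
end
end

section
/- Let m ≥ 2 be an integer and a = 1/(2m). Define Q : [0,1]² ∖ E → ℤ₊ ∪ {∞} by Q(p) = inf{n ≥ 1 : S_nφᶜ(p) = −log m and f_a^n(p) ∈ Ω⁺_β} for p ∈ Ω⁺_α, and Q(p) = inf{n ≥ 1 : S_nφᶜ(p) = 0 and f_a^n(p) ∈ Ω⁺_β} for p ∈ Ω⁺_β ∖ E. Then Q(p) < ∞ for Lebesgue-almost every p ∈ [0,1]² ∖ E. -/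
open MeasureTheory Set

noncomputable section

/-- The unit square `[0,1]²`. -/
def unitSq : Set (ℝ × ℝ) := Icc 0 1 ×ˢ Icc 0 1

/-- Lebesgue measure on `[0,1]²`. -/
def Leb2 : Measure (ℝ × ℝ) := volume.restrict unitSq

/-- `Ω⁺_α = ⋃_{i=1}^m Ω⁺_{α_i} = [0, ma) × [0,1]`. -/
def OmegaAlpha (m : ℕ) (a : ℝ) : Set (ℝ × ℝ) := Ico 0 (m * a) ×ˢ Icc 0 1

/-- `Ω⁺_β = ⋃_{i=1}^m Ω⁺_{β_i} = [ma, 1] × [0,1]`. -/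
def OmegaBeta (m : ℕ) (a : ℝ) : Set (ℝ × ℝ) := Icc (m * a) 1 ×ˢ Icc 0 1

/-- The central Jacobian `φᶜ`: `-log m` on `Ω⁺_α`, `log m` on `Ω⁺_β`. -/
def phiC (m : ℕ) (a : ℝ) (p : ℝ × ℝ) : ℝ :=
  if p.1 < m * a then -Real.log m else Real.log m

/-- The Birkhoff sum `S_n φᶜ = ∑_{k=0}^{n-1} φᶜ ∘ f_a^k` (with `S_0 φᶜ ≡ 0`). -/
def birk (m : ℕ) (a : ℝ) (n : ℕ) (p : ℝ × ℝ) : ℝ :=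
  ∑ k ∈ Finset.range n, phiC m a ((hbaker m a)^[k] p)

/-- `E = Ω⁺_β ∩ f_a⁻¹(Ω⁺_β)`. -/
def Eset (m : ℕ) (a : ℝ) : Set (ℝ × ℝ) :=
  OmegaBeta m a ∩ (hbaker m a) ⁻¹' OmegaBeta m a

/-! Only the first coordinate matters: `S_n φᶜ = T_n · log m`, where `T_n` is the `±1` walk along
the `τ_a`-orbit that steps down on `[0, ma)` and up on `[ma, 1]`, and `f_a^n p ∈ Ω⁺_β` says that
step `n + 1` goes up. If `Q(p) = ∞`, the walk started at `p.1` (for `p ∈ Ω⁺_α`) or at `τ_a p.1`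
(for `p ∈ Ω⁺_β ∖ E`) never rises above `0`. For `a = 1/(2m)` each branch of `τ_a` pushes
Lebesgue measure forward with weight `1/2`, so `v_k = Leb {x | ∀ n, T_n x ≤ k}` satisfies
`v_0 = v_1 / 2` and `v_{k+1} = (v_{k+2} + v_k) / 2`. Hence `v_k = (k + 1) v_0`, and since
`v_k ≤ 1`, `v_0 = 0`. -/

lemma eq_zero_of_bddAbove_of_add_eq_two_mul {u : ℕ → ℝ} (h₀ : 0 ≤ u 0) (h₁ : u 1 = 2 * u 0)
    (hu : ∀ k, u (k + 2) + u k = 2 * u (k + 1)) (hb : BddAbove (range u)) : u 0 = 0 := by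
  have hlin : ∀ k, u k = (k + 1) * u 0 := by
    refine Nat.twoStepInduction (by simp) (by rw [h₁]; norm_num) fun k hk hk₁ ↦ ?_
    push_cast at hk₁ ⊢
    linarith [hu k]
  obtain ⟨C, hC⟩ := hb
  refine le_antisymm (not_lt.1 fun hpos ↦ ?_) h₀
  obtain ⟨n, hn⟩ := exists_nat_gt (C / u 0)
  have hun : u n ≤ C := hC ⟨n, rfl⟩
  rw [hlin, ← not_lt] at hun
  exact hun ((div_lt_iff₀ hpos).1 hn |>.trans_le (by nlinarith))

section Walk

variable {α : Type*} (τ : α → α) (L : Set α)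

open Classical in
def walkStep (x : α) : ℤ := if x ∈ L then -1 else 1

def walkSum (n : ℕ) (x : α) : ℤ := ∑ k ∈ Finset.range n, walkStep L (τ^[k] x)

def walkBounded (c : ℤ) : Set α := {x | ∀ n, walkSum τ L n x ≤ c}

variable {τ L}

lemma walkStep_of_mem {x : α} (hx : x ∈ L) : walkStep L x = -1 := if_pos hx

lemma walkStep_of_notMem {x : α} (hx : x ∉ L) : walkStep L x = 1 := if_neg hx

lemma walkStep_le_one (x : α) : walkStep L x ≤ 1 := by
  unfold walkStep; split_ifs <;> norm_num

@[simp]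
lemma walkSum_zero (x : α) : walkSum τ L 0 x = 0 := rfl

lemma walkSum_succ (n : ℕ) (x : α) :
    walkSum τ L (n + 1) x = walkSum τ L n x + walkStep L (τ^[n] x) :=
  Finset.sum_range_succ _ _

lemma walkSum_succ' (n : ℕ) (x : α) :
    walkSum τ L (n + 1) x = walkStep L x + walkSum τ L n (τ x) := by
  simp only [walkSum, Finset.sum_range_succ', Function.iterate_succ_apply,
    Function.iterate_zero_apply, add_comm]

lemma nonneg_of_mem_walkBounded {c : ℤ} {x : α} (hx : x ∈ walkBounded τ L c) : 0 ≤ c :=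
  hx 0

lemma mem_walkBounded_iff {c : ℤ} {x : α} :
    x ∈ walkBounded τ L c ↔ 0 ≤ c ∧ τ x ∈ walkBounded τ L (c - walkStep L x) := by
  refine ⟨fun hx ↦ ⟨hx 0, fun n ↦ ?_⟩, fun ⟨hc, hx⟩ n ↦ ?_⟩
  · linarith [hx (n + 1), walkSum_succ' (τ := τ) (L := L) n x]
  · cases n with
    | zero => exact hc
    | succ n => linarith [hx n, walkSum_succ' (τ := τ) (L := L) n x]

lemma mem_walkBounded_zero_of_forall {x : α} (hx : x ∈ L)
    (h : ∀ n, 1 ≤ n → walkSum τ L n x = -1 → τ^[n] x ∈ L) : x ∈ walkBounded τ L 0 := by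
  have hneg : ∀ n, 1 ≤ n → walkSum τ L n x ≤ -1 := by
    intro n hn
    induction n, hn using Nat.le_induction with
    | base => simp [walkSum, walkStep_of_mem hx]
    | succ n hn ih =>
      rw [walkSum_succ]
      rcases ih.eq_or_lt with heq | hlt
      · rw [walkStep_of_mem (h n hn heq)]; omega
      · linarith [walkStep_le_one (L := L) (τ^[n] x)]
  rintro (_ | n)
  · simp
  · linarith [hneg (n + 1) le_add_self]

lemma apply_mem_walkBounded_zero_of_forall {x : α} (hx : x ∉ L) (hτx : τ x ∈ L)
    (h : ∀ n, 1 ≤ n → walkSum τ L n x = 0 → τ^[n] x ∈ L) : τ x ∈ walkBounded τ L 0 := by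
  refine mem_walkBounded_zero_of_forall hτx fun n hn hsum ↦ ?_
  rw [← Function.iterate_succ_apply]
  exact h (n + 1) le_add_self (by rw [walkSum_succ', walkStep_of_notMem hx, hsum]; rfl)

lemma walkBounded_zero_eq : walkBounded τ L 0 = L ∩ τ ⁻¹' walkBounded τ L 1 := by
  ext x
  rw [mem_walkBounded_iff]
  by_cases hx : x ∈ L
  · simp [hx, walkStep_of_mem hx]
  · simpa [hx, walkStep_of_notMem hx] using
      fun h ↦ absurd (nonneg_of_mem_walkBounded h) (by norm_num)

lemma walkBounded_add_one_inter (c : ℤ) (hc : 0 ≤ c) :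
    walkBounded τ L (c + 1) ∩ L = L ∩ τ ⁻¹' walkBounded τ L (c + 2) := by
  ext x
  rw [mem_inter_iff, mem_walkBounded_iff]
  by_cases hx : x ∈ L
  · simp only [hx, walkStep_of_mem hx, sub_neg_eq_add, add_assoc, one_add_one_eq_two, and_true,
      mem_inter_iff, true_and, mem_preimage]
    exact and_iff_right (by omega)
  · simp [hx]

lemma walkBounded_add_one_sdiff (c : ℤ) (hc : 0 ≤ c) :
    walkBounded τ L (c + 1) \ L = Lᶜ ∩ τ ⁻¹' walkBounded τ L c := by
  ext x
  rw [mem_sdiff, mem_walkBounded_iff]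
  by_cases hx : x ∈ L
  · simp [hx]
  · simp [hx, walkStep_of_notMem hx]; omega

variable [MeasurableSpace α] {μ : Measure α}

lemma measure_preimage_eq_of_half (hL : MeasurableSet L)
    (hτL : ∀ A, μ (L ∩ τ ⁻¹' A) = 2⁻¹ * μ A) (hτLc : ∀ A, μ (Lᶜ ∩ τ ⁻¹' A) = 2⁻¹ * μ A)
    (A : Set α) : μ (τ ⁻¹' A) = μ A := by
  rw [← measure_inter_add_sdiff _ hL, sdiff_eq, inter_comm, inter_comm (τ ⁻¹' A), hτL, hτLc,
    ← add_mul, ENNReal.inv_two_add_inv_two, one_mul]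

theorem measure_walkBounded_zero_eq_zero [IsFiniteMeasure μ] (hL : MeasurableSet L)
    (hτL : ∀ A, μ (L ∩ τ ⁻¹' A) = 2⁻¹ * μ A) (hτLc : ∀ A, μ (Lᶜ ∩ τ ⁻¹' A) = 2⁻¹ * μ A) :
    μ (walkBounded τ L 0) = 0 := by
  have h₁ : μ (walkBounded τ L 0) = 2⁻¹ * μ (walkBounded τ L 1) := by
    rw [walkBounded_zero_eq, hτL]
  have hu : ∀ k : ℕ, μ (walkBounded τ L (k + 1)) =
      2⁻¹ * μ (walkBounded τ L (k + 2)) + 2⁻¹ * μ (walkBounded τ L k) := by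
    intro k
    rw [← measure_inter_add_sdiff _ hL, walkBounded_add_one_inter _ k.cast_nonneg,
      walkBounded_add_one_sdiff _ k.cast_nonneg, hτL, hτLc]
  refine (measureReal_eq_zero_iff).1 <| eq_zero_of_bddAbove_of_add_eq_two_mul
    (u := fun k : ℕ ↦ μ.real (walkBounded τ L k)) measureReal_nonneg ?_ (fun k ↦ ?_)
    ⟨μ.real univ, by rintro _ ⟨k, rfl⟩; exact measureReal_mono (subset_univ _)⟩
  · simp [measureReal_def, h₁, ENNReal.toReal_mul]
  · simp only [measureReal_def]
    push_cast
    rw [hu k, ENNReal.toReal_add (by finiteness) (by finiteness), ENNReal.toReal_mul,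
      ENNReal.toReal_mul]
    norm_num
    ring

end Walk

section TauMap

variable {m : ℕ} {a : ℝ}

lemma volume_Ico_inter_preimage_fract (n : ℕ) (A : Set ℝ) :
    volume (Ico 0 (n : ℝ) ∩ Int.fract ⁻¹' A) = n * volume (A ∩ Ico 0 1) := by
  induction n with
  | zero => simp
  | succ n ih =>
    have hstrip : (Ico 0 ((n + 1 : ℕ) : ℝ) ∩ Int.fract ⁻¹' A) \ Ico 0 (n : ℝ) =
        (· + -(n : ℝ)) ⁻¹' (A ∩ Ico 0 1) := by
      ext x
      have hfract : (n : ℝ) ≤ x → x < n + 1 → Int.fract x = x + -n := fun h₀ h₁ ↦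
        Int.fract_eq_iff.2 ⟨by linarith, by linarith, n, by push_cast; ring⟩
      simp only [mem_sdiff, mem_inter_iff, mem_Ico, mem_preimage, not_and, not_lt]
      push_cast
      constructor
      · rintro ⟨⟨⟨h₀, h₁⟩, hA⟩, hn⟩
        have hnx := hn h₀
        exact ⟨hfract hnx h₁ ▸ hA, by linarith, by linarith⟩
      · rintro ⟨hA, h₀, h₁⟩
        have hn : (0 : ℝ) ≤ n := n.cast_nonneg
        exact ⟨⟨⟨by linarith, by linarith⟩, by rwa [hfract (by linarith) (by linarith)]⟩,
          fun _ ↦ by linarith⟩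
    rw [← measure_inter_add_sdiff _ (measurableSet_Ico (a := (0 : ℝ)) (b := n)), hstrip,
      measure_preimage_add_right, inter_right_comm, inter_eq_right.2
        (Ico_subset_Ico_right (by simp)), ih]
    push_cast
    ring

lemma tauMap_of_lt {x : ℝ} (hx : x < m * a) : tauMap m a x = Int.fract (a⁻¹ * x) := by
  rw [tauMap, if_pos hx, inv_mul_eq_div]

lemma tauMap_of_le {x : ℝ} (hx : m * a ≤ x) :
    tauMap m a x = (1 - m * a)⁻¹ * (x + -(m * a)) := by
  rw [tauMap, if_neg hx.not_gt, ← sub_eq_add_neg, inv_mul_eq_div]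

lemma restrict_Iio_inter_preimage_tauMap (ha : 0 < a) (hma : m * a ≤ 1) (A : Set ℝ) :
    volume.restrict (Ico 0 1) (Iio (m * a) ∩ tauMap m a ⁻¹' A) =
      ENNReal.ofReal (m * a) * volume.restrict (Ico 0 1) A := by
  have hset : Iio (m * a) ∩ tauMap m a ⁻¹' A ∩ Ico 0 1 =
      (a⁻¹ * ·) ⁻¹' (Ico 0 (m : ℝ) ∩ Int.fract ⁻¹' A) := by
    ext x
    have hlt : a⁻¹ * x < m ↔ x < m * a := by rw [inv_mul_lt_iff₀ ha, mul_comm]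
    have hnonneg : 0 ≤ a⁻¹ * x ↔ 0 ≤ x := mul_nonneg_iff_of_pos_left (inv_pos.2 ha)
    simp only [mem_inter_iff, mem_Iio, mem_preimage, mem_Ico]
    constructor
    · rintro ⟨⟨hx, hA⟩, h₀, -⟩
      exact ⟨⟨hnonneg.2 h₀, hlt.2 hx⟩, tauMap_of_lt hx ▸ hA⟩
    · rintro ⟨⟨h₀, hx⟩, hA⟩
      replace hx := hlt.1 hx
      exact ⟨⟨hx, by rwa [tauMap_of_lt hx]⟩, hnonneg.1 h₀, by linarith⟩
  rw [Measure.restrict_apply' measurableSet_Ico, Measure.restrict_apply' measurableSet_Ico, hset,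
    Real.volume_preimage_mul_left (inv_ne_zero ha.ne'), volume_Ico_inter_preimage_fract,
    inv_inv, abs_of_pos ha, ← mul_assoc, ENNReal.ofReal_mul (Nat.cast_nonneg _),
    ENNReal.ofReal_natCast, mul_comm (ENNReal.ofReal a)]

lemma restrict_compl_Iio_inter_preimage_tauMap (ha : 0 ≤ a) (hma : m * a < 1) (A : Set ℝ) :
    volume.restrict (Ico 0 1) ((Iio (m * a))ᶜ ∩ tauMap m a ⁻¹' A) =
      ENNReal.ofReal (1 - m * a) * volume.restrict (Ico 0 1) A := by
  have hpos : 0 < 1 - m * a := by linarith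
  have hset : (Iio (m * a))ᶜ ∩ tauMap m a ⁻¹' A ∩ Ico 0 1 =
      (· + -(m * a)) ⁻¹' ((1 - m * a)⁻¹ * ·) ⁻¹' (A ∩ Ico 0 1) := by
    ext x
    have hlt : (1 - m * a)⁻¹ * (x + -(m * a)) < 1 ↔ x < 1 := by
      rw [inv_mul_lt_iff₀ hpos]; constructor <;> intro <;> linarith
    have hnonneg : 0 ≤ (1 - m * a)⁻¹ * (x + -(m * a)) ↔ m * a ≤ x := by
      rw [mul_nonneg_iff_of_pos_left (inv_pos.2 hpos)]; constructor <;> intro <;> linarith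
    simp only [mem_inter_iff, mem_compl_iff, mem_Iio, not_lt, mem_preimage, mem_Ico]
    constructor
    · rintro ⟨⟨hx, hA⟩, -, h₁⟩
      exact ⟨tauMap_of_le hx ▸ hA, hnonneg.2 hx, hlt.2 h₁⟩
    · rintro ⟨hA, h₀, h₁⟩
      replace h₀ := hnonneg.1 h₀
      exact ⟨⟨h₀, by rwa [tauMap_of_le h₀]⟩, by nlinarith [m.cast_nonneg (α := ℝ)], hlt.1 h₁⟩
  rw [Measure.restrict_apply' measurableSet_Ico, Measure.restrict_apply' measurableSet_Ico, hset,
    measure_preimage_add_right, Real.volume_preimage_mul_left (inv_ne_zero hpos.ne'), inv_inv,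
    abs_of_pos hpos]

end TauMap

section Baker

variable {m : ℕ} {a : ℝ}

lemma mapsTo_tauMap (hma : m * a ≤ 1) : MapsTo (tauMap m a) (Icc 0 1) (Icc 0 1) := by
  intro x ⟨_, hx₁⟩
  unfold tauMap
  split_ifs with hx
  · exact ⟨Int.fract_nonneg _, (Int.fract_lt_one _).le⟩
  · exact ⟨div_nonneg (by linarith) (by linarith), div_le_one_of_le₀ (by linarith) (by linarith)⟩

lemma hbaker_snd_mem_Icc (ha : 0 < a) {p : ℝ × ℝ} (hp : p ∈ unitSq) :
    (hbaker m a p).2 ∈ Icc 0 1 := by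
  obtain ⟨⟨hx₀, -⟩, hy₀, hy₁⟩ := hp
  unfold hbaker
  split_ifs with hx
  · have hm : (0 : ℝ) < m := pos_of_mul_pos_left (hx₀.trans_lt hx) ha.le
    have hfloor₀ : (0 : ℝ) ≤ ⌊p.1 / a⌋ := by
      exact_mod_cast Int.floor_nonneg.2 (div_nonneg hx₀ ha.le)
    have hfloor₁ : (⌊p.1 / a⌋ : ℝ) + 1 ≤ m := by
      have : ⌊p.1 / a⌋ < (m : ℤ) := Int.floor_lt.2 (by push_cast; rwa [div_lt_iff₀ ha])
      exact_mod_cast this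
    rw [← add_div]
    exact ⟨by positivity, (div_le_one hm).2 (by linarith)⟩
  · dsimp only
    unfold betaIdx
    split_ifs with hy
    · simp [hy]
    · push_cast
      have h₁ := Int.floor_le ((m : ℝ) * p.2)
      have h₂ := Int.lt_floor_add_one ((m : ℝ) * p.2)
      constructor <;> linarith

lemma hbaker_fst (p : ℝ × ℝ) : (hbaker m a p).1 = tauMap m a p.1 := by
  unfold hbaker; split_ifs <;> rfl

lemma iterate_hbaker_fst (n : ℕ) (p : ℝ × ℝ) :
    ((hbaker m a)^[n] p).1 = (tauMap m a)^[n] p.1 :=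
  Function.Semiconj.iterate_right (f := Prod.fst) hbaker_fst n p

lemma mapsTo_hbaker (ha : 0 < a) (hma : m * a ≤ 1) : MapsTo (hbaker m a) unitSq unitSq :=
  fun p hp ↦ ⟨hbaker_fst p ▸ mapsTo_tauMap hma hp.1, hbaker_snd_mem_Icc ha hp⟩

lemma mem_omegaBeta_iff {q : ℝ × ℝ} (hq : q ∈ unitSq) :
    q ∈ OmegaBeta m a ↔ q.1 ∉ Iio (m * a) := by
  simp only [OmegaBeta, mem_prod, mem_Icc, mem_Iio, not_lt]
  exact ⟨fun h ↦ h.1.1, fun h ↦ ⟨⟨h, hq.1.2⟩, hq.2⟩⟩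

lemma iterate_hbaker_mem_omegaBeta_iff (ha : 0 < a) (hma : m * a ≤ 1) {p : ℝ × ℝ}
    (hp : p ∈ unitSq) (n : ℕ) :
    (hbaker m a)^[n] p ∈ OmegaBeta m a ↔ (tauMap m a)^[n] p.1 ∉ Iio (m * a) := by
  rw [mem_omegaBeta_iff ((mapsTo_hbaker ha hma).iterate n hp), iterate_hbaker_fst]

lemma birk_eq_walkSum_mul_log (n : ℕ) (p : ℝ × ℝ) :
    birk m a n p = walkSum (tauMap m a) (Iio (m * a)) n p.1 * Real.log m := by
  simp only [birk, walkSum, Int.cast_sum, Finset.sum_mul]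
  refine Finset.sum_congr rfl fun k _ ↦ ?_
  unfold phiC walkStep
  rw [iterate_hbaker_fst]
  by_cases h : (tauMap m a)^[k] p.1 < m * a <;> simp [h]

lemma fst_mem_walkBounded_of_mem_omegaAlpha (ha : 0 < a) (hma : m * a ≤ 1)
    {p : ℝ × ℝ} (hp : p ∈ OmegaAlpha m a)
    (hQ : ∀ n : ℕ, 1 ≤ n → ¬(birk m a n p = -Real.log m ∧ (hbaker m a)^[n] p ∈ OmegaBeta m a)) :
    p.1 ∈ walkBounded (tauMap m a) (Iio (m * a)) 0 := by
  have hp' : p ∈ unitSq := ⟨⟨hp.1.1, hp.1.2.le.trans hma⟩, hp.2⟩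
  refine mem_walkBounded_zero_of_forall hp.1.2 fun n hn hsum ↦ not_not.1 fun hβ ↦ hQ n hn ⟨?_,
    (iterate_hbaker_mem_omegaBeta_iff ha hma hp' n).2 hβ⟩
  simp [birk_eq_walkSum_mul_log, hsum]

lemma tauMap_fst_mem_walkBounded_of_mem_omegaBeta (ha : 0 < a) (hma : m * a ≤ 1)
    {p : ℝ × ℝ} (hp : p ∈ OmegaBeta m a) (hE : p ∉ Eset m a)
    (hQ : ∀ n : ℕ, 1 ≤ n → ¬(birk m a n p = 0 ∧ (hbaker m a)^[n] p ∈ OmegaBeta m a)) :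
    tauMap m a p.1 ∈ walkBounded (tauMap m a) (Iio (m * a)) 0 := by
  have hp' : p ∈ unitSq := ⟨⟨(mul_nonneg m.cast_nonneg ha.le).trans hp.1.1, hp.1.2⟩, hp.2⟩
  have hτp : tauMap m a p.1 ∈ Iio (m * a) := not_not.1 fun h ↦
    hE ⟨hp, (iterate_hbaker_mem_omegaBeta_iff ha hma hp' 1).2 h⟩
  refine apply_mem_walkBounded_zero_of_forall (not_lt.2 hp.1.1) hτp fun n hn hsum ↦
    not_not.1 fun hβ ↦ hQ n hn ⟨?_, (iterate_hbaker_mem_omegaBeta_iff ha hma hp' n).2 hβ⟩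
  simp [birk_eq_walkSum_mul_log, hsum]

end Baker

lemma leb2_preimage_fst_eq_zero {N : Set ℝ} (hN : volume.restrict (Ico 0 1) N = 0) :
    Leb2 (Prod.fst ⁻¹' N) = 0 := by
  have hLeb2 : Leb2 = (volume.restrict (Ico (0 : ℝ) 1)).prod (volume.restrict (Ico 0 1)) := by
    rw [Leb2, unitSq, Measure.volume_eq_prod, ← Measure.prod_restrict,
      ← Measure.restrict_congr_set Ico_ae_eq_Icc]
  rw [hLeb2]
  exact Measure.quasiMeasurePreserving_fst.preimage_null hN

/-- **Lemma 2.6.** Let `a = 1/(2m)`.  Define `Q : [0,1]² ∖ E → ℤ₊ ∪ {∞}` by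
`Q(p) = inf {n ≥ 1 : S_n φᶜ(p) = -log m and f_a^n(p) ∈ Ω⁺_β}` on `Ω⁺_α` and
`Q(p) = inf {n ≥ 1 : S_n φᶜ(p) = 0 and f_a^n(p) ∈ Ω⁺_β}` on `Ω⁺_β ∖ E`.
Then `Q < ∞` Lebesgue-a.e. on `[0,1]² ∖ E`; i.e. the set where the corresponding
infimum is over the empty set is Lebesgue-null. -/
theorem Q_finite_ae (m : ℕ) (hm : 2 ≤ m) :
    Leb2 {p : ℝ × ℝ | p ∉ Eset m (1 / (2 * m)) ∧
      ((p ∈ OmegaAlpha m (1 / (2 * m)) ∧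
          ∀ n : ℕ, 1 ≤ n → ¬(birk m (1 / (2 * m)) n p = -Real.log m ∧
            (hbaker m (1 / (2 * m)))^[n] p ∈ OmegaBeta m (1 / (2 * m)))) ∨
        (p ∈ OmegaBeta m (1 / (2 * m)) ∧
          ∀ n : ℕ, 1 ≤ n → ¬(birk m (1 / (2 * m)) n p = 0 ∧
            (hbaker m (1 / (2 * m)))^[n] p ∈ OmegaBeta m (1 / (2 * m)))))} = 0 := by
  have hma : (m : ℝ) * (1 / (2 * m)) = 2⁻¹ := by
    have : (m : ℝ) ≠ 0 := by exact_mod_cast (by omega : m ≠ 0)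
    field_simp
  have hhalf : ENNReal.ofReal 2⁻¹ = 2⁻¹ := by
    rw [ENNReal.ofReal_inv_of_pos two_pos, ENNReal.ofReal_ofNat]
  set a : ℝ := 1 / (2 * m)
  have ha : 0 < a := pos_of_mul_pos_right (hma ▸ by norm_num) m.cast_nonneg
  have hma₁ : (m : ℝ) * a ≤ 1 := by rw [hma]; norm_num
  set μ := volume.restrict (Ico (0 : ℝ) 1)
  have hL (A : Set ℝ) : μ (Iio (m * a) ∩ tauMap m a ⁻¹' A) = 2⁻¹ * μ A := by
    rw [restrict_Iio_inter_preimage_tauMap ha hma₁, hma, hhalf]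
  have hLc (A : Set ℝ) : μ ((Iio (m * a))ᶜ ∩ tauMap m a ⁻¹' A) = 2⁻¹ * μ A := by
    rw [restrict_compl_Iio_inter_preimage_tauMap ha.le (by linarith), hma,
      (by norm_num : (1 : ℝ) - 2⁻¹ = 2⁻¹), hhalf]
  have hW := measure_walkBounded_zero_eq_zero measurableSet_Iio hL hLc
  refine measure_mono_null ?_ (leb2_preimage_fst_eq_zero (measure_union_null hW
    ((measure_preimage_eq_of_half measurableSet_Iio hL hLc _).trans hW)))
  rintro p ⟨hE, ⟨hp, hQ⟩ | ⟨hp, hQ⟩⟩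
  · exact Or.inl (fst_mem_walkBounded_of_mem_omegaAlpha ha hma₁ hp hQ)
  · exact Or.inr (tauMap_fst_mem_walkBounded_of_mem_omegaBeta ha hma₁ hp hE hQ)
end
end
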